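/- Let f : ℝ^n → ℝ^n be convex, monotone, and additively homogeneous, with an eigenvector, and suppose f has exactly one critical class. Then the eigenvector of f is unique up to an additive constant: for any two eigenvectors v and v' of f there exists μ ∈ ℝ with v' = μ·1 + v. -/

import Mathlib

open Matrix Filter

/-- `f` is additively homogeneous: `f (c·1 + x) = c·1 + f x`. -/
def AddHomog {n : ℕ} (f : (Fin n → ℝ) → (Fin n → ℝ)) : Prop :=
  ∀ (c : ℝ) (x : Fin n → ℝ), f (fun i => c + x i) = fun i => c + f x i

/-- A map between coordinate spaces is convex if each coordinate function is convex. -/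
def IsConvexMap {n m : ℕ} (f : (Fin n → ℝ) → (Fin m → ℝ)) : Prop :=
  ∀ i, ConvexOn ℝ Set.univ (fun x => f x i)

/-- Subdifferential of a convex map `f : ℝ^n → ℝ^m` at `v`: matrices `P` with
`f x - f v ≥ P (x - v)` componentwise. -/
def Subdiff {n m : ℕ} (f : (Fin n → ℝ) → (Fin m → ℝ)) (v : Fin n → ℝ) :
    Set (Matrix (Fin m) (Fin n) ℝ) :=
  {P | ∀ x i, P.mulVec (x - v) i ≤ f x i - f v i}

/-- `p` is a stochastic vector. -/
def IsStochVec {n : ℕ} (p : Fin n → ℝ) : Prop := (∀ i, 0 ≤ p i) ∧ ∑ i, p i = 1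

/-- `P` is a row-stochastic matrix. -/
def IsStochMat {n : ℕ} (P : Matrix (Fin n) (Fin n) ℝ) : Prop := ∀ i, IsStochVec (P i)

/-- `i` has access to `j` in the graph of the nonnegative matrix `P`
(arcs `i → j` when `P i j ≠ 0`). -/
def MatAccess {n : ℕ} (P : Matrix (Fin n) (Fin n) ℝ) : Fin n → Fin n → Prop :=
  Relation.ReflTransGen (fun i j => P i j ≠ 0)

/-- `C` is a class of `P`: an equivalence class of mutual access. -/
def IsClass {n : ℕ} (P : Matrix (Fin n) (Fin n) ℝ) (C : Set (Fin n)) : Prop :=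
  ∃ i, C = {j | MatAccess P i j ∧ MatAccess P j i}

/-- `C` is a final class of `P`: a class with no access out of itself. -/
def IsFinalClass {n : ℕ} (P : Matrix (Fin n) (Fin n) ℝ) (C : Set (Fin n)) : Prop :=
  IsClass P C ∧ ∀ i ∈ C, ∀ j, MatAccess P i j → j ∈ C

/-- `N^f(P)`: the union of the final classes of `P`. -/
def finalNodes {n : ℕ} (P : Matrix (Fin n) (Fin n) ℝ) : Set (Fin n) :=
  {i | ∃ C, IsFinalClass P C ∧ i ∈ C}

/-- Final graph `G^f(P)`: union of graphs of `P_{FF}` over final classes `F`. -/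
def finalGraph {n : ℕ} (P : Matrix (Fin n) (Fin n) ℝ) : Fin n → Fin n → Prop :=
  fun i j => ∃ C, IsFinalClass P C ∧ i ∈ C ∧ j ∈ C ∧ P i j ≠ 0

/-- `N^f(PP)` for a set of matrices. -/
def finalNodesSet {n : ℕ} (PP : Set (Matrix (Fin n) (Fin n) ℝ)) : Set (Fin n) :=
  {i | ∃ P ∈ PP, i ∈ finalNodes P}

/-- `𝒞^f(PP)`: final classes of matrices in `PP`. -/
def finalClassesSet {n : ℕ} (PP : Set (Matrix (Fin n) (Fin n) ℝ)) : Set (Set (Fin n)) :=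
  {C | ∃ P ∈ PP, IsFinalClass P C}

/-- `𝒢^f(PP)`: union of final graphs of matrices in `PP`. -/
def finalGraphSet {n : ℕ} (PP : Set (Matrix (Fin n) (Fin n) ℝ)) : Fin n → Fin n → Prop :=
  fun i j => ∃ P ∈ PP, finalGraph P i j

/-- Access in a directed graph given as a relation. -/
def GAccess {n : ℕ} (G : Fin n → Fin n → Prop) : Fin n → Fin n → Prop :=
  Relation.ReflTransGen G

/-- `C` is a (nontrivial) class of the graph `G`: an equivalence class of mutual
access containing at least one arc (i.e. the node set of a strongly connected component
of the graph `G`). -/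
def IsGraphClass {n : ℕ} (G : Fin n → Fin n → Prop) (C : Set (Fin n)) : Prop :=
  (∃ i, C = {j | GAccess G i j ∧ GAccess G j i}) ∧ ∃ i ∈ C, ∃ j ∈ C, G i j

/-- `G^k`: arcs are directed paths of length `k` in `G`. -/
def GraphPow {n : ℕ} (G : Fin n → Fin n → Prop) (k : ℕ) : Fin n → Fin n → Prop :=
  fun i j => ∃ c : ℕ → Fin n, c 0 = i ∧ c k = j ∧ ∀ t < k, G (c t) (c (t + 1))

/-- There is a circuit of length `ℓ ≥ 1` of `G` with all nodes in `C`. -/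
def HasCircuitIn {n : ℕ} (G : Fin n → Fin n → Prop) (C : Set (Fin n)) (ℓ : ℕ) : Prop :=
  0 < ℓ ∧ ∃ c : ℕ → Fin n, c 0 = c ℓ ∧ (∀ t ≤ ℓ, c t ∈ C) ∧ ∀ t < ℓ, G (c t) (c (t + 1))

/-- gcd of a set of natural numbers. -/
noncomputable def SetGcd (S : Set ℕ) : ℕ :=
  sInf {d | (∀ s ∈ S, d ∣ s) ∧ ∀ e, (∀ s ∈ S, e ∣ s) → e ∣ d}

/-- lcm of a set of natural numbers. -/
noncomputable def SetLcm (S : Set ℕ) : ℕ :=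
  sInf {m | (∀ s ∈ S, s ∣ m) ∧ ∀ e, (∀ s ∈ S, s ∣ e) → m ∣ e}

/-- Cyclicity of a graph: lcm over the strongly connected components of the
gcd of the lengths of their circuits. -/
noncomputable def GraphCyclicity {n : ℕ} (G : Fin n → Fin n → Prop) : ℕ :=
  SetLcm {d | ∃ C, IsGraphClass G C ∧ d = SetGcd {ℓ | HasCircuitIn G C ℓ}}

/-- The (additive) eigenspace of `f` for eigenvalue `lam`. -/
def Eigenspace {n : ℕ} (f : (Fin n → ℝ) → (Fin n → ℝ)) (lam : ℝ) : Set (Fin n → ℝ) :=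
  {x | f x = fun i => lam + x i}

/-- Restriction of a vector to the coordinates in `C`. -/
def restrictTo {n : ℕ} (C : Set (Fin n)) (x : Fin n → ℝ) : C → ℝ := fun i => x i


/-!
Every `P ∈ ∂f(y)` is row-stochastic (monotonicity and homogeneity), and for eigenvectors `x, y`
with the same eigenvalue `P (x - y) ≤ x - y`. So the set where `x - y` is minimal is closed under
the arcs of `P` and contains a final class `F` of `P`. On `F` also `u - y` is constant, so
replacing the rows of a matrix of `∂f(u)` indexed by `F` with those of `P` gives a matrix of
`∂f(u)` with final class `F`; hence `F` lies in the critical class `C`, and `x - y` attains its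
minimum on `C`. For `y = u` the argmin of `x - u` is closed under all critical arcs and thus
contains `C`. For eigenvectors `v, v'` the difference `v' - v` is therefore constant on `C`, and
both its minimum and its maximum are attained there.

Subgradients exist by Hahn–Banach applied to the (sublinear) directional derivative.
-/

open Set

section Subgradient

variable {E : Type*} [AddCommGroup E] [Module ℝ E] {φ : E → ℝ}

-- For convex `φ` the quotients are bounded below (`ConvexOn.sub_le_diffQuot`), so this is a
-- genuine infimum and not the junk value of `⨅` on an unbounded family.
noncomputable def dirDeriv (φ : E → ℝ) (v y : E) : ℝ :=
  ⨅ t : Ioi (0 : ℝ), (φ (v + (t : ℝ) • y) - φ v) / t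

variable (v : E)

lemma le_dirDeriv {y : E} {a : ℝ} (h : ∀ t > 0, a ≤ (φ (v + t • y) - φ v) / t) :
    a ≤ dirDeriv φ v y :=
  le_ciInf fun t => h t t.2

lemma diffQuot_smul (y : E) {c t : ℝ} (hc : 0 < c) (ht : 0 < t) :
    (φ (v + t • c • y) - φ v) / t = c * ((φ (v + (t * c) • y) - φ v) / (t * c)) := by
  rw [smul_smul]
  field_simp

namespace ConvexOn

lemma comp_line (hφ : ConvexOn ℝ univ φ) (y : E) :
    ConvexOn ℝ univ fun t : ℝ => φ (v + t • y) := by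
  simpa [Function.comp_def, AffineMap.lineMap_apply, add_comm] using
    hφ.comp_affineMap (AffineMap.lineMap v (v + y))

lemma diffQuot_mono (hφ : ConvexOn ℝ univ φ) (y : E) {s t : ℝ} (hs : 0 < s) (hst : s ≤ t) :
    (φ (v + s • y) - φ v) / s ≤ (φ (v + t • y) - φ v) / t := by
  simpa using (hφ.comp_line v y).secant_mono (a := 0) trivial trivial trivial hs.ne'
    (hs.trans_le hst).ne' hst

lemma sub_le_diffQuot (hφ : ConvexOn ℝ univ φ) (y : E) {t : ℝ} (ht : 0 < t) :
    φ v - φ (v - y) ≤ (φ (v + t • y) - φ v) / t := by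
  have := (hφ.comp_line v y).secant_mono (a := 0) trivial trivial trivial
    (by norm_num : (-1 : ℝ) ≠ 0) ht.ne' (by linarith : (-1 : ℝ) ≤ t)
  simpa [← sub_eq_add_neg, div_neg] using this

lemma dirDeriv_le (hφ : ConvexOn ℝ univ φ) (y : E) {t : ℝ} (ht : 0 < t) :
    dirDeriv φ v y ≤ (φ (v + t • y) - φ v) / t := by
  refine ciInf_le ⟨φ v - φ (v - y), ?_⟩ (⟨t, ht⟩ : Ioi (0 : ℝ))
  rintro _ ⟨s, rfl⟩
  exact hφ.sub_le_diffQuot v y s.2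

lemma dirDeriv_smul (hφ : ConvexOn ℝ univ φ) {c : ℝ} (hc : 0 < c) (y : E) :
    dirDeriv φ v (c • y) = c * dirDeriv φ v y := by
  apply le_antisymm
  · rw [mul_comm, ← div_le_iff₀ hc]
    refine le_dirDeriv v fun t ht => ?_
    rw [div_le_iff₀ hc, mul_comm]
    have := hφ.dirDeriv_le v (c • y) (div_pos ht hc)
    rwa [diffQuot_smul v y hc (div_pos ht hc), div_mul_cancel₀ t hc.ne'] at this
  · refine le_dirDeriv v fun t ht => ?_
    rw [diffQuot_smul v y hc ht]
    exact mul_le_mul_of_nonneg_left (hφ.dirDeriv_le v y (mul_pos ht hc)) hc.le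

lemma diffQuot_add_le (hφ : ConvexOn ℝ univ φ) (y z : E) {t : ℝ} (ht : 0 < t) :
    (φ (v + t • (y + z)) - φ v) / t ≤
      (φ (v + (2 * t) • y) - φ v) / (2 * t) + (φ (v + (2 * t) • z) - φ v) / (2 * t) := by
  have hmid : (1 / 2 : ℝ) • (v + (2 * t) • y) + (1 / 2 : ℝ) • (v + (2 * t) • z) =
      v + t • (y + z) := by
    module
  have := hφ.2 (mem_univ (v + (2 * t) • y)) (mem_univ (v + (2 * t) • z))
    (by norm_num : (0 : ℝ) ≤ 1 / 2) (by norm_num : (0 : ℝ) ≤ 1 / 2) (by norm_num)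
  rw [hmid, smul_eq_mul, smul_eq_mul] at this
  rw [← add_div, div_le_div_iff₀ ht (by positivity)]
  nlinarith

lemma dirDeriv_add_le (hφ : ConvexOn ℝ univ φ) (y z : E) :
    dirDeriv φ v (y + z) ≤ dirDeriv φ v y + dirDeriv φ v z := by
  have key : ∀ s > 0, ∀ t > 0, dirDeriv φ v (y + z) ≤
      (φ (v + s • y) - φ v) / s + (φ (v + t • z) - φ v) / t := by
    intro s hs t ht
    have hr : 0 < min s t / 2 := by positivity
    calc dirDeriv φ v (y + z) ≤ (φ (v + (min s t / 2) • (y + z)) - φ v) / (min s t / 2) :=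
          hφ.dirDeriv_le v _ hr
      _ ≤ (φ (v + min s t • y) - φ v) / min s t + (φ (v + min s t • z) - φ v) / min s t := by
          simpa [mul_div_cancel₀] using hφ.diffQuot_add_le v y z hr
      _ ≤ _ := add_le_add (hφ.diffQuot_mono v y (by positivity) (min_le_left s t))
          (hφ.diffQuot_mono v z (by positivity) (min_le_right s t))
  have hy : ∀ t > 0, dirDeriv φ v (y + z) - (φ (v + t • z) - φ v) / t ≤ dirDeriv φ v y :=
    fun t ht => le_dirDeriv v fun s hs => by linarith [key s hs t ht]
  have hz : dirDeriv φ v (y + z) - dirDeriv φ v y ≤ dirDeriv φ v z :=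
    le_dirDeriv v fun t ht => by linarith [hy t ht]
  linarith

theorem exists_linearMap_le_sub (hφ : ConvexOn ℝ univ φ) :
    ∃ g : E →ₗ[ℝ] ℝ, ∀ x, g (x - v) ≤ φ x - φ v := by
  obtain ⟨g, -, hg⟩ := exists_extension_of_le_sublinear ⟨⊥, 0⟩ (dirDeriv φ v)
    (fun c hc y => hφ.dirDeriv_smul v hc y) (hφ.dirDeriv_add_le v) (by
      rintro ⟨x, hx⟩
      obtain rfl := (Submodule.mem_bot ℝ).1 hx
      simpa using le_dirDeriv (φ := φ) v (y := 0) (a := 0) fun t _ => by simp)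
  exact ⟨g, fun x => (hg _).trans (by simpa using hφ.dirDeriv_le v (x - v) one_pos)⟩

end ConvexOn

end Subgradient

section Subdifferential

variable {n : ℕ} {f : (Fin n → ℝ) → (Fin n → ℝ)} {v : Fin n → ℝ}

lemma Subdiff.nonempty (hconv : IsConvexMap f) (v : Fin n → ℝ) : (Subdiff f v).Nonempty := by
  choose g hg using fun i => (hconv i).exists_linearMap_le_sub v
  exact ⟨LinearMap.toMatrix' (LinearMap.pi g), fun x i => by
    simpa [LinearMap.toMatrix'_mulVec] using hg i x⟩

lemma isStochMat_of_mem_subdiff (hmon : Monotone f) (hhom : AddHomog f)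
    {P : Matrix (Fin n) (Fin n) ℝ} (hP : P ∈ Subdiff f v) : IsStochMat P := by
  refine fun i => ⟨fun j => ?_, ?_⟩
  · have h := hP (v - Pi.single j 1) i
    have hle : f (v - Pi.single j 1) i ≤ f v i :=
      hmon (sub_le_self v (Pi.single_nonneg.2 zero_le_one)) i
    simp only [sub_sub_cancel_left, Matrix.mulVec_neg, Matrix.mulVec_single_one, Pi.neg_apply,
      Matrix.col_apply] at h
    linarith
  · have key : ∀ c : ℝ, c * ∑ j, P i j ≤ c := fun c => by
      have h := hP (fun k => c + v k) i
      rw [hhom c v] at h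
      simpa [Matrix.mulVec, dotProduct, Finset.mul_sum, mul_comm] using h
    linarith [key 1, key (-1)]

end Subdifferential

lemma Relation.ReflTransGen.mem_of_closed {α : Type*} {r : α → α → Prop} {S : Set α}
    (hS : ∀ a ∈ S, ∀ b, r a b → b ∈ S) {a b : α} (hab : Relation.ReflTransGen r a b)
    (ha : a ∈ S) : b ∈ S := by
  induction hab with
  | refl => exact ha
  | tail _ hbc ih => exact hS _ ih _ hbc

section Matrices

variable {n : ℕ} {P Q : Matrix (Fin n) (Fin n) ℝ} {F S : Set (Fin n)}

namespace IsStochMat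

lemma exists_ne_zero (hP : IsStochMat P) (i : Fin n) : ∃ j, P i j ≠ 0 := by
  by_contra! h
  simpa [h] using (hP i).2

lemma mulVec_apply_eq (hP : IsStochMat P) {z : Fin n → ℝ} {i : Fin n} {c : ℝ}
    (hz : ∀ j, P i j ≠ 0 → z j = c) : (P *ᵥ z) i = c := by
  have hterm : ∀ j, P i j * z j = P i j * c := fun j => by
    by_cases h : P i j = 0
    · simp [h]
    · rw [hz j h]
  simp only [Matrix.mulVec, dotProduct, hterm, ← Finset.sum_mul, (hP i).2, one_mul]

lemma eq_of_mulVec_le (hP : IsStochMat P) {z : Fin n → ℝ} {i j : Fin n}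
    (hz : (P *ᵥ z) i ≤ z i) (hmin : ∀ k, P i k ≠ 0 → z i ≤ z k) (hij : P i j ≠ 0) :
    z j = z i := by
  have hterm : ∀ k, 0 ≤ P i k * (z k - z i) := fun k => by
    by_cases h : P i k = 0
    · simp [h]
    · exact mul_nonneg ((hP i).1 k) (sub_nonneg.2 (hmin k h))
  have hsum : ∑ k, P i k * (z k - z i) = (P *ᵥ z) i - z i := by
    simp only [mul_sub, Finset.sum_sub_distrib, ← Finset.sum_mul, (hP i).2, one_mul]
    rfl
  have hzero := (Finset.sum_eq_zero_iff_of_nonneg fun k _ => hterm k).1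
    (le_antisymm (by linarith) (Finset.sum_nonneg fun k _ => hterm k)) j (Finset.mem_univ j)
  linarith [(mul_eq_zero.1 hzero).resolve_left hij]

end IsStochMat

lemma IsClass.matAccess (hC : IsClass P S) {a b : Fin n} (ha : a ∈ S) (hb : b ∈ S) :
    MatAccess P a b := by
  obtain ⟨i, rfl⟩ := hC
  exact ha.2.trans hb.1

lemma IsClass.nonempty (hC : IsClass P S) : S.Nonempty := by
  obtain ⟨i, rfl⟩ := hC
  exact ⟨i, .refl, .refl⟩

lemma exists_isFinalClass_subset (P : Matrix (Fin n) (Fin n) ℝ)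
    (hS : ∀ i ∈ S, ∀ j, P i j ≠ 0 → j ∈ S) (hne : S.Nonempty) :
    ∃ F, IsFinalClass P F ∧ F ⊆ S := by
  obtain ⟨i₀, hi₀⟩ := hne
  let reach : Fin n → Set (Fin n) := fun i => {j | MatAccess P i j}
  -- a node whose reachable set is smallest is reached back from every node it reaches
  obtain ⟨i, hi₀i, hmin⟩ := Set.exists_min_image (reach i₀) (fun i => (reach i).ncard)
    (Set.toFinite _) ⟨i₀, .refl⟩
  have hback : ∀ k, MatAccess P i k → MatAccess P k i := fun k hik => by
    have hsub : reach k ⊆ reach i := fun j hkj => hik.trans hkj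
    have heq := Set.eq_of_subset_of_ncard_le hsub (hmin k (hi₀i.trans hik)) (Set.toFinite _)
    show i ∈ reach k
    rw [heq]
    exact .refl
  refine ⟨reach i, ⟨⟨i, ?_⟩, fun a ha b hab => ha.trans hab⟩,
    fun j hij => (hi₀i.trans hij).mem_of_closed hS hi₀⟩
  ext j
  exact ⟨fun hij => ⟨hij, hback j hij⟩, And.left⟩

lemma IsStochMat.eq_on_finalClass (hP : IsStochMat P) (hF : IsFinalClass P F)
    {z : Fin n → ℝ} (hz : ∀ i, (P *ᵥ z) i ≤ z i) {a b : Fin n} (ha : a ∈ F) (hb : b ∈ F) :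
    z a = z b := by
  obtain ⟨i, hiF, hmin⟩ := Set.exists_min_image F z (Set.toFinite F) ⟨a, ha⟩
  have hclosed : ∀ k ∈ {k | k ∈ F ∧ z k = z i}, ∀ j, P k j ≠ 0 →
      j ∈ {k | k ∈ F ∧ z k = z i} := by
    rintro k ⟨hkF, hk⟩ j hkj
    have hF' : ∀ j, P k j ≠ 0 → j ∈ F := fun j hkj => hF.2 k hkF j (.single hkj)
    refine ⟨hF' j hkj, ?_⟩
    rw [hP.eq_of_mulVec_le (hz k) (fun l hl => hk ▸ hmin l (hF' l hl)) hkj, hk]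
  have hval : ∀ c ∈ F, z c = z i := fun c hc =>
    ((hF.1.matAccess hiF hc).mem_of_closed hclosed ⟨hiF, rfl⟩).2
  rw [hval a ha, hval b hb]

lemma matAccess_of_rows_eq (hS : ∀ i ∈ S, ∀ j, P i j ≠ 0 → j ∈ S)
    (hPQ : ∀ i ∈ S, Q i = P i) {a b : Fin n} (ha : a ∈ S) (hab : MatAccess P a b) :
    MatAccess Q a b := by
  have hstep : ∀ k ∈ {k | k ∈ S ∧ MatAccess Q a k}, ∀ j, P k j ≠ 0 →
      j ∈ {k | k ∈ S ∧ MatAccess Q a k} := by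
    rintro k ⟨hkS, hak⟩ j hkj
    exact ⟨hS k hkS j hkj, hak.tail (by rwa [hPQ k hkS])⟩
  exact (hab.mem_of_closed hstep ⟨ha, .refl⟩).2

lemma IsFinalClass.of_rows_eq (hF : IsFinalClass P F) (hPQ : ∀ i ∈ F, Q i = P i) :
    IsFinalClass Q F := by
  have hP : ∀ i ∈ F, ∀ j, P i j ≠ 0 → j ∈ F := fun i hi j hij => hF.2 i hi j (.single hij)
  have hQ : ∀ i ∈ F, ∀ j, Q i j ≠ 0 → j ∈ F := fun i hi j hij =>
    hP i hi j (by rwa [← hPQ i hi])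
  have hQP : ∀ i ∈ F, P i = Q i := fun i hi => (hPQ i hi).symm
  have hiff : ∀ a ∈ F, ∀ b, MatAccess Q a b ↔ MatAccess P a b := fun a ha b =>
    ⟨matAccess_of_rows_eq hQ hQP ha, matAccess_of_rows_eq hP hPQ ha⟩
  obtain ⟨i, hiF⟩ := hF.1.nonempty
  refine ⟨⟨i, ?_⟩, fun a ha b hab => hF.2 a ha b ((hiff a ha b).1 hab)⟩
  ext j
  constructor
  · intro hj
    exact ⟨(hiff i hiF j).2 (hF.1.matAccess hiF hj), (hiff j hj i).2 (hF.1.matAccess hj hiF)⟩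
  · rintro ⟨hij, -⟩
    exact hF.2 i hiF j ((hiff i hiF j).1 hij)

lemma IsFinalClass.exists_isGraphClass_superset {PP : Set (Matrix (Fin n) (Fin n) ℝ)}
    (hQ : Q ∈ PP) (hstoch : IsStochMat Q) (hF : IsFinalClass Q F) :
    ∃ C, IsGraphClass (finalGraphSet PP) C ∧ F ⊆ C := by
  have harc : ∀ a ∈ F, ∀ b, Q a b ≠ 0 → b ∈ F ∧ finalGraphSet PP a b := fun a ha b hab =>
    have hb := hF.2 a ha b (.single hab)
    ⟨hb, Q, hQ, F, hF, ha, hb, hab⟩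
  have hacc : ∀ a ∈ F, ∀ b ∈ F, GAccess (finalGraphSet PP) a b := by
    intro a ha b hb
    have hstep : ∀ k ∈ {k | k ∈ F ∧ GAccess (finalGraphSet PP) a k}, ∀ j, Q k j ≠ 0 →
        j ∈ {k | k ∈ F ∧ GAccess (finalGraphSet PP) a k} := by
      rintro k ⟨hkF, hak⟩ j hkj
      exact ⟨(harc k hkF j hkj).1, hak.tail (harc k hkF j hkj).2⟩
    exact ((hF.1.matAccess ha hb).mem_of_closed hstep ⟨ha, .refl⟩).2
  obtain ⟨i, hi⟩ := hF.1.nonempty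
  obtain ⟨j, hij⟩ := hstoch.exists_ne_zero i
  have hsub : F ⊆ {j | GAccess (finalGraphSet PP) i j ∧ GAccess (finalGraphSet PP) j i} :=
    fun k hk => ⟨hacc i hi k hk, hacc k hk i hi⟩
  exact ⟨_, ⟨⟨i, rfl⟩, i, hsub hi, j, hsub (harc i hi j hij).1, (harc i hi j hij).2⟩, hsub⟩

end Matrices

section Eigenvectors

variable {n : ℕ} {f : (Fin n → ℝ) → (Fin n → ℝ)} {lam : ℝ} {u x y : Fin n → ℝ}
  {P : Matrix (Fin n) (Fin n) ℝ} {F C : Set (Fin n)}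

lemma mulVec_sub_le_of_mem_subdiff (hx : x ∈ Eigenspace f lam) (hy : y ∈ Eigenspace f lam)
    (hP : P ∈ Subdiff f y) (i : Fin n) : (P *ᵥ (x - y)) i ≤ (x - y) i := by
  have h := hP x i
  rw [hx, hy] at h
  simpa using h

lemma forall_sub_le_of_mem_subdiff (hmon : Monotone f) (hhom : AddHomog f)
    (hx : x ∈ Eigenspace f lam) (hy : y ∈ Eigenspace f lam) (hP : P ∈ Subdiff f y)
    {i j : Fin n} (hi : ∀ k, (x - y) i ≤ (x - y) k) (hij : P i j ≠ 0) :
    ∀ k, (x - y) j ≤ (x - y) k := by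
  rw [(isStochMat_of_mem_subdiff hmon hhom hP).eq_of_mulVec_le
    (mulVec_sub_le_of_mem_subdiff hx hy hP i) (fun k _ => hi k) hij]
  exact hi

lemma exists_mem_subdiff_isFinalClass (hconv : IsConvexMap f) (hmon : Monotone f)
    (hhom : AddHomog f) (hu : u ∈ Eigenspace f lam) (hy : y ∈ Eigenspace f lam)
    (hP : P ∈ Subdiff f y) (hF : IsFinalClass P F) : ∃ Q ∈ Subdiff f u, IsFinalClass Q F := by
  classical
  obtain ⟨Q₀, hQ₀⟩ := Subdiff.nonempty hconv u
  have hstoch := isStochMat_of_mem_subdiff hmon hhom hP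
  let Q : Matrix (Fin n) (Fin n) ℝ := Matrix.of fun i => if i ∈ F then P i else Q₀ i
  refine ⟨Q, fun x i => ?_, hF.of_rows_eq fun i hi => if_pos hi⟩
  by_cases hi : i ∈ F
  · have hQP : (Q *ᵥ (x - u)) i = (P *ᵥ (x - y)) i - (P *ᵥ (u - y)) i := by
      rw [← Pi.sub_apply, ← Matrix.mulVec_sub, sub_sub_sub_cancel_right]
      simp only [Matrix.mulVec, Q, Matrix.of_apply, if_pos hi]
    have hPuy : (P *ᵥ (u - y)) i = (u - y) i := hstoch.mulVec_apply_eq fun j hij =>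
      hstoch.eq_on_finalClass hF (mulVec_sub_le_of_mem_subdiff hu hy hP)
        (hF.2 i hi j (.single hij)) hi
    have h := hP x i
    rw [hy] at h
    rw [hQP, hPuy, hu]
    simp only [Pi.sub_apply] at h ⊢
    linarith
  · have hQ : (Q *ᵥ (x - u)) i = (Q₀ *ᵥ (x - u)) i := by
      simp only [Matrix.mulVec, Q, Matrix.of_apply, if_neg hi]
    exact hQ ▸ hQ₀ x i

lemma IsGraphClass.gAccess {G : Fin n → Fin n → Prop} (hC : IsGraphClass G C) {a b : Fin n}
    (ha : a ∈ C) (hb : b ∈ C) : GAccess G a b := by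
  obtain ⟨⟨i, rfl⟩, -⟩ := hC
  exact ha.2.trans hb.1

lemma subset_criticalClass_of_isFinalClass
    (hconv : IsConvexMap f) (hmon : Monotone f) (hhom : AddHomog f) (hu : u ∈ Eigenspace f lam)
    (hC : ∀ C', IsGraphClass (finalGraphSet (Subdiff f u)) C' → C' = C)
    (hy : y ∈ Eigenspace f lam) (hP : P ∈ Subdiff f y) (hF : IsFinalClass P F) : F ⊆ C := by
  obtain ⟨Q, hQ, hQF⟩ := exists_mem_subdiff_isFinalClass hconv hmon hhom hu hy hP hF
  obtain ⟨C', hC', hFC'⟩ :=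
    hQF.exists_isGraphClass_superset hQ (isStochMat_of_mem_subdiff hmon hhom hQ)
  exact hC C' hC' ▸ hFC'

lemma exists_mem_criticalClass_forall_sub_le [Nonempty (Fin n)]
    (hconv : IsConvexMap f) (hmon : Monotone f) (hhom : AddHomog f) (hu : u ∈ Eigenspace f lam)
    (hC : ∀ C', IsGraphClass (finalGraphSet (Subdiff f u)) C' → C' = C)
    (hx : x ∈ Eigenspace f lam) (hy : y ∈ Eigenspace f lam) :
    ∃ i ∈ C, ∀ k, (x - y) i ≤ (x - y) k := by
  obtain ⟨P, hP⟩ := Subdiff.nonempty hconv y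
  obtain ⟨F, hF, hFT⟩ := exists_isFinalClass_subset P
    (fun i hi j hij => forall_sub_le_of_mem_subdiff hmon hhom hx hy hP hi hij)
    (Finite.exists_min (x - y))
  obtain ⟨i, hi⟩ := hF.1.nonempty
  exact ⟨i, subset_criticalClass_of_isFinalClass hconv hmon hhom hu hC hy hP hF hi, hFT hi⟩

lemma sub_eq_on_criticalClass [Nonempty (Fin n)]
    (hconv : IsConvexMap f) (hmon : Monotone f) (hhom : AddHomog f) (hu : u ∈ Eigenspace f lam)
    (hC : ∀ C', IsGraphClass (finalGraphSet (Subdiff f u)) C' → C' = C)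
    (hCC : IsGraphClass (finalGraphSet (Subdiff f u)) C) (hx : x ∈ Eigenspace f lam)
    {i k : Fin n} (hi : i ∈ C) (hk : k ∈ C) : x i - u i = x k - u k := by
  obtain ⟨i₀, hi₀C, hi₀⟩ := exists_mem_criticalClass_forall_sub_le hconv hmon hhom hu hC hx hu
  have hT : ∀ a ∈ {a | ∀ k, (x - u) a ≤ (x - u) k}, ∀ b, finalGraphSet (Subdiff f u) a b →
      b ∈ {a | ∀ k, (x - u) a ≤ (x - u) k} := by
    rintro a ha b ⟨Q, hQ, -, -, -, -, hab⟩
    exact forall_sub_le_of_mem_subdiff hmon hhom hx hu hQ ha hab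
  have hCT : ∀ j ∈ C, ∀ k, (x - u) j ≤ (x - u) k := fun j hj =>
    (hCC.gAccess hi₀C hj).mem_of_closed hT hi₀
  exact le_antisymm (hCT i hi k) (hCT k hk i)

end Eigenvectors

theorem stmt5_general (n : ℕ) (f : (Fin n → ℝ) → (Fin n → ℝ))
    (hconv : IsConvexMap f) (hmon : Monotone f) (hhom : AddHomog f)
    (u : Fin n → ℝ) (lam : ℝ) (hu : f u = fun i => lam + u i)
    (huniq : ∃! C, IsGraphClass (finalGraphSet (Subdiff f u)) C)
    (v v' : Fin n → ℝ)
    (hv : f v = fun i => lam + v i) (hv' : f v' = fun i => lam + v' i) :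
    ∃ μ : ℝ, v' = fun i => μ + v i := by
  obtain ⟨C, hC, hCuniq⟩ := huniq
  obtain ⟨i₀, -⟩ := hC.2
  have : Nonempty (Fin n) := ⟨i₀⟩
  obtain ⟨i, hiC, hi⟩ := exists_mem_criticalClass_forall_sub_le hconv hmon hhom hu hCuniq hv' hv
  obtain ⟨k, hkC, hk⟩ := exists_mem_criticalClass_forall_sub_le hconv hmon hhom hu hCuniq hv hv'
  have hv_ik := sub_eq_on_criticalClass hconv hmon hhom hu hCuniq hC hv hiC hkC
  have hv'_ik := sub_eq_on_criticalClass hconv hmon hhom hu hCuniq hC hv' hiC hkC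
  refine ⟨v' i - v i, funext fun j => ?_⟩
  have hij := hi j
  have hkj := hk j
  simp only [Pi.sub_apply] at hij hkj
  linarith

/-- a convex monotone additively homogeneous map with a unique critical
class has a unique eigenvector up to an additive constant. -/
theorem stmt5 (n : ℕ) (hn : 1 ≤ n) (f : (Fin n → ℝ) → (Fin n → ℝ))
    (hconv : IsConvexMap f) (hmon : Monotone f) (hhom : AddHomog f)
    (u : Fin n → ℝ) (lam : ℝ) (hu : f u = fun i => lam + u i)
    (huniq : ∃! C, IsGraphClass (finalGraphSet (Subdiff f u)) C)
    (v v' : Fin n → ℝ)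
    (hv : f v = fun i => lam + v i) (hv' : f v' = fun i => lam + v' i) :
    ∃ μ : ℝ, v' = fun i => μ + v i :=
  stmt5_general n f hconv hmon hhom u lam hu huniq v v' hv hv'
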